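/- Fix d ≥ 1, β ≥ 0 and n ∈ ℕ, and assume (as guaranteed by the Lee–Yang circle theorem) that all |Λ_n| roots of the polynomial P_n lie on the unit circle, listed with multiplicity as exp(iθ_{1,n}),…,exp(iθ_{|Λ_n|,n}) with 0 < θ_{1,n} ≤ ⋯ ≤ θ_{|Λ_n|,n} < 2π. Then for every z in the open unit disk 𝔻, the average magnetization density satisfies m_{Λ_n}(z) = (1/|Λ_n|)·Σ_{j=1}^{|Λ_n|} (exp(iθ_{j,n}) + z)/(exp(iθ_{j,n}) − z). -/

import Mathlib

open MeasureTheory Filter Topology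
open scoped ENNReal

noncomputable section

/-- The box `Λ_n = [-n,n]^d ∩ ℤ^d`. -/
def Lam (d n : ℕ) : Finset (Fin d → ℤ) :=
  Finset.Icc (fun _ => -(n : ℤ)) (fun _ => (n : ℤ))

/-- Spin configurations on `Λ_n` (a `Bool` per site; `true ↦ +1`, `false ↦ -1`). -/
abbrev Config (d n : ℕ) := {x // x ∈ Lam d n} → Bool

/-- The ±1 spin value at a site. -/
def spin {d n : ℕ} (σ : Config d n) (u : {x // x ∈ Lam d n}) : ℝ :=
  if σ u then 1 else -1

/-- ℓ¹ distance on `ℤ^d`. -/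
def dist1 {d : ℕ} (u v : Fin d → ℤ) : ℤ := ∑ i, |u i - v i|

/-- `Σ_{{u,v} ∈ E_n} σ_u σ_v`, the sum over (unordered) nearest-neighbour edges of `Λ_n`. -/
def edgeSum (d n : ℕ) (σ : Config d n) : ℝ :=
  (1 / 2) * ∑ u : {x // x ∈ Lam d n}, ∑ v : {x // x ∈ Lam d n},
    (if dist1 (u : Fin d → ℤ) (v : Fin d → ℤ) = 1 then spin σ u * spin σ v else 0)

/-- The number `|E_n|` of nearest-neighbour edges of `Λ_n`. -/
def nEdges (d n : ℕ) : ℕ :=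
  (Finset.univ.filter
    (fun p : {x // x ∈ Lam d n} × {x // x ∈ Lam d n} =>
      dist1 (p.1 : Fin d → ℤ) (p.2 : Fin d → ℤ) = 1)).card / 2

/-- Total magnetization `Y_n(σ) = Σ_{u ∈ Λ_n} σ_u`. -/
def Ymag {d n : ℕ} (σ : Config d n) : ℝ := ∑ u, spin σ u

/-- Free boundary condition Ising expectation `⟨f⟩_{Λ_n,β}` (zero external field). -/
def ev (d n : ℕ) (β : ℝ) (f : Config d n → ℝ) : ℝ :=
  (∑ σ : Config d n, f σ * Real.exp (β * edgeSum d n σ)) /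
    (∑ σ : Config d n, Real.exp (β * edgeSum d n σ))

/-- The spin at a point of `ℤ^d` (zero if the point is outside `Λ_n`). -/
def spinAt {d n : ℕ} (σ : Config d n) (x : Fin d → ℤ) : ℝ :=
  if h : x ∈ Lam d n then spin σ ⟨x, h⟩ else 0

/-- The finite-volume two-point function `⟨σ_0 σ_x⟩_{Λ_n,β}`. -/
def twoPoint (d n : ℕ) (β : ℝ) (x : Fin d → ℤ) : ℝ :=
  ev d n β (fun σ => spinAt σ 0 * spinAt σ x)

/-- The critical inverse temperature
`β_c(d) = sup {β ≥ 0 : Σ_{x ∈ ℤ^d} lim_n ⟨σ_0 σ_x⟩_{Λ_n,β} < ∞}`. -/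
def betac (d : ℕ) : ℝ :=
  sSup {β : ℝ | 0 ≤ β ∧ ∃ g : (Fin d → ℤ) → ℝ, Summable g ∧
    ∀ x, Tendsto (fun n => twoPoint d n β x) atTop (𝓝 (g x))}

/-- The second moment `⟨Y_n²⟩_{Λ_n,β}`. -/
def varY (d n : ℕ) (β : ℝ) : ℝ := ev d n β (fun σ => (Ymag σ) ^ 2)

/-- The fourth cumulant `u₄(Y_n) = ⟨Y_n⁴⟩ - 3⟨Y_n²⟩²`. -/
def u4 (d n : ℕ) (β : ℝ) : ℝ :=
  ev d n β (fun σ => (Ymag σ) ^ 4) - 3 * (varY d n β) ^ 2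

/-- Expectation `E_{Λ_n,β}[f(X_n)]` in the model perturbed by the critical
Curie–Weiss interaction, i.e. with Hamiltonian
`-β Σ σ_uσ_v - Y_n²/(2⟨Y_n²⟩_{Λ_n,β})`. -/
def evX (d n : ℕ) (β : ℝ) (f : ℝ → ℝ) : ℝ :=
  (∑ σ : Config d n, f (Ymag σ) *
      Real.exp (β * edgeSum d n σ + (Ymag σ) ^ 2 / (2 * varY d n β))) /
    (∑ σ : Config d n,
      Real.exp (β * edgeSum d n σ + (Ymag σ) ^ 2 / (2 * varY d n β)))

/-- The Ising probability measure on configurations. -/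
def isingMeasure (d n : ℕ) (β : ℝ) : Measure (Config d n) :=
  ∑ σ : Config d n,
    (ENNReal.ofReal (Real.exp (β * edgeSum d n σ) /
      ∑ τ : Config d n, Real.exp (β * edgeSum d n τ))) • Measure.dirac σ

/-- The probability measure of the Curie–Weiss–perturbed Ising model. -/
def pertMeasure (d n : ℕ) (β : ℝ) : Measure (Config d n) :=
  ∑ σ : Config d n,
    (ENNReal.ofReal (Real.exp (β * edgeSum d n σ + (Ymag σ) ^ 2 / (2 * varY d n β)) /
      ∑ τ : Config d n,
        Real.exp (β * edgeSum d n τ + (Ymag τ) ^ 2 / (2 * varY d n β)))) • Measure.dirac σ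

/-- The distribution of the total magnetization `Y_n`. -/
def lawY (d n : ℕ) (β : ℝ) : Measure ℝ := (isingMeasure d n β).map Ymag

/-- The distribution of `Y_n/√⟨Y_n²⟩_{Λ_n,β}`. -/
def lawYnorm (d n : ℕ) (β : ℝ) : Measure ℝ :=
  (lawY d n β).map (fun x => x / Real.sqrt (varY d n β))

/-- The distribution of `X_n`, the total magnetization of the perturbed model. -/
def lawX (d n : ℕ) (β : ℝ) : Measure ℝ := (pertMeasure d n β).map Ymag

/-- The distribution of `X_n/√(E_{Λ_n,β}(X_n²))`. -/
def lawXnorm (d n : ℕ) (β : ℝ) : Measure ℝ :=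
  (lawX d n β).map (fun x => x / Real.sqrt (evX d n β (fun y => y ^ 2)))

/-- The distribution of `W_n = X_n + √λ_n N(0,1)`, with `λ_n = ⟨Y_n²⟩_{Λ_n,β}` and
`N(0,1)` a standard normal independent of `X_n`. -/
def lawW (d n : ℕ) (β : ℝ) : Measure ℝ :=
  ((lawX d n β).prod (ProbabilityTheory.gaussianReal 0 (Real.toNNReal (varY d n β)))).map
    (fun p => p.1 + p.2)

/-- `d_n = ⟨Y_n²⟩⁻¹ (-u₄(Y_n)/4!)^{1/4}`. -/
def dcoef (d n : ℕ) (β : ℝ) : ℝ :=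
  (1 / varY d n β) * (-(u4 d n β) / 24) ^ ((1 : ℝ) / 4)

/-- `c_n = √⟨Y_n²⟩/(√(2π) ⟨exp(Y_n²/(2⟨Y_n²⟩))⟩) · (4!/(-u₄(Y_n)))^{1/4}`. -/
def ccoef (d n : ℕ) (β : ℝ) : ℝ :=
  (Real.sqrt (varY d n β) /
      (Real.sqrt (2 * Real.pi) *
        ev d n β (fun σ => Real.exp ((Ymag σ) ^ 2 / (2 * varY d n β))))) *
    (24 / (-(u4 d n β))) ^ ((1 : ℝ) / 4)

/-- The distribution of `d_n W_n`. -/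
def lawDW (d n : ℕ) (β : ℝ) : Measure ℝ := (lawW d n β).map (fun x => dcoef d n β * x)

/-- The distribution of `W̃_n = W_n/√(E_{Λ_n,β}(X_n²))`. -/
def lawWtilde (d n : ℕ) (β : ℝ) : Measure ℝ :=
  (lawW d n β).map (fun x => x / Real.sqrt (evX d n β (fun y => y ^ 2)))

/-- The moment generating function `z ↦ ⟨exp(zY_n)⟩_{Λ_n,β}` of `Y_n`. -/
def mgfY (d n : ℕ) (β : ℝ) (z : ℂ) : ℂ :=
  (∑ σ : Config d n, Complex.exp (z * (Ymag σ : ℂ)) * (Real.exp (β * edgeSum d n σ) : ℂ)) /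
    (∑ σ : Config d n, (Real.exp (β * edgeSum d n σ) : ℂ))

/-- `α : ℕ → ℝ` is the (nondecreasing, with multiplicity) listing of the Lee–Yang
zeros of `⟨exp(zY_n)⟩_{Λ_n,β}`: all its zeros are `{± i α_j : j ≥ 1}` with
`0 < α_1 ≤ α_2 ≤ ⋯`, and the multiplicity of the zero at `±iα_j` is the number of
indices `k` with `α_k = α_j`. -/
def IsLYListing (d n : ℕ) (β : ℝ) (α : ℕ → ℝ) : Prop :=
  (∀ j, 0 < α j) ∧ Monotone α ∧
    (∀ j, mgfY d n β (Complex.I * (α j : ℂ)) = 0) ∧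
    (∀ z : ℂ, mgfY d n β z = 0 →
      ∃ j, z = Complex.I * (α j : ℂ) ∨ z = -(Complex.I * (α j : ℂ))) ∧
    (∀ j, ∀ hA : AnalyticAt ℂ (mgfY d n β) (Complex.I * (α j : ℂ)),
      analyticOrderAt (mgfY d n β) (Complex.I * (α j : ℂ)) = ({k | α k = α j}.ncard : ℕ∞))

/-- Convergence in distribution (weak convergence of laws on `ℝ`):
integrals of every bounded continuous function converge. -/
def TendstoInDistr (μ : ℕ → Measure ℝ) (ν : Measure ℝ) : Prop :=
  ∀ f : BoundedContinuousFunction ℝ ℝ,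
    Tendsto (fun n => ∫ x, f x ∂(μ n)) atTop (𝓝 (∫ x, f x ∂ν))


/-- The partition function `Z_{Λ_n,β,h}` of the Ising model on `Λ_n` with free boundary
conditions and (complex) external field `h`. -/
def Zpart (d n : ℕ) (β : ℝ) (h : ℂ) : ℂ :=
  ∑ σ : Config d n, Complex.exp ((β * edgeSum d n σ : ℝ) + h * (Ymag σ : ℝ))

/-- `N₋(σ)`, the number of minus spins of the configuration `σ`. -/
def Nminus {d n : ℕ} (σ : Config d n) : ℕ :=
  (Finset.univ.filter (fun u => σ u = false)).card

/-- The average magnetization density `m_{Λ_n}(z) = ⟨Σ_{u∈Λ_n}σ_u⟩_{Λ_n,β,h}/|Λ_n|`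
viewed as a rational function of `z = e^{-2h}`. -/
def magDen (d n : ℕ) (β : ℝ) (z : ℂ) : ℂ :=
  (∑ σ : Config d n, (Ymag σ : ℂ) * (Real.exp (β * edgeSum d n σ) : ℂ) * z ^ Nminus σ) /
    (((Lam d n).card : ℂ) *
      ∑ σ : Config d n, (Real.exp (β * edgeSum d n σ) : ℂ) * z ^ Nminus σ)

/-- `θ : ℕ → ℝ` (restricted to `j < |Λ_n|`) lists, with multiplicity and in nondecreasing
order, the arguments of the `|Λ_n|` roots (all on the unit circle, by the Lee–Yang circle
theorem) of the polynomial `P_n(z) = Σ_σ e^{βΣσσ} z^{N₋(σ)}` associated with the partition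
function via `Z_{Λ_n,β,h} = e^{h|Λ_n|} P_n(e^{-2h})`. -/
def IsCircleRootListing (d n : ℕ) (β : ℝ) (θ : ℕ → ℝ) : Prop :=
  (∀ j, j < (Lam d n).card → 0 < θ j ∧ θ j < 2 * Real.pi) ∧
  (∀ j k, j ≤ k → k < (Lam d n).card → θ j ≤ θ k) ∧
  ∀ z : ℂ, (∑ σ : Config d n, (Real.exp (β * edgeSum d n σ) : ℂ) * z ^ Nminus σ) =
    (Real.exp (β * edgeSum d n (fun _ => false)) : ℂ) *
      ∏ j ∈ Finset.range ((Lam d n).card), (z - Complex.exp (Complex.I * (θ j : ℝ)))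

/-- The empirical distribution `μ_n` of the Lee–Yang zeros `exp(iθ_{j,n})`. -/
def empMeasure (d n : ℕ) (θ : ℕ → ℝ) : Measure ℂ :=
  (((Lam d n).card : ℝ≥0∞))⁻¹ •
    ∑ j ∈ Finset.range ((Lam d n).card), Measure.dirac (Complex.exp (Complex.I * (θ j : ℝ)))

/-- A random variable (here: its law `μ` on `ℝ`) is of Lee–Yang type if it is symmetric,
has a finite Gaussian exponential moment, and its moment generating function has only
pure imaginary zeros. -/
def IsLYType (μ : Measure ℝ) : Prop :=
  μ.map (fun x => -x) = μ ∧
  (∃ D : ℝ, 0 < D ∧ ∫⁻ x, ENNReal.ofReal (Real.exp (D * x ^ 2)) ∂μ < ⊤) ∧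
  ∀ z : ℂ, (∫ x : ℝ, Complex.exp (z * (x : ℝ)) ∂μ) = 0 → z.re = 0

/-- The density `f_W(x) = K e^{-κ₁ x⁴} ∏_{j≥1} (1 + x²/a_j²) e^{-x²/a_j²}` from Theorem 1;
indices `j` with `a_j = ∞` contribute a factor `1` (here `(∞ : ℝ≥0∞).toReal = 0` and
`x²/0 = 0` by convention, so the formula below implements exactly this). -/
def fW (K κ : ℝ) (a : ℕ → ℝ≥0∞) (x : ℝ) : ℝ :=
  K * Real.exp (-(κ * x ^ 4)) *
    ∏' j, ((1 + x ^ 2 / ((a j).toReal) ^ 2) * Real.exp (-(x ^ 2 / ((a j).toReal) ^ 2)))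

/-!
Writing `m = |Λ_n|` and `N₋(σ)` for the number of minus spins, the magnetization is
`Σ_u σ_u = m - 2 N₋(σ)`, so the numerator of `m_{Λ_n}(z)` is `m P_n(z) - 2 z P_n'(z)` and
`m_{Λ_n}(z) = 1 - (2z/m) P_n'(z)/P_n(z)`. Since `P_n = c ∏_j (X - e^{iθ_j})`, the logarithmic
derivative is `Σ_j 1/(z - e^{iθ_j})`, and `1 - 2z/(z - w) = (w + z)/(w - z)`. For `|z| < 1`
no root lies at `z`, because all roots lie on the unit circle.
-/

open Polynomial

theorem X_mul_eval_derivative_sum_C_mul_X_pow {R ι : Type*} [CommSemiring R] (s : Finset ι)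
    (a : ι → R) (N : ι → ℕ) (x : R) :
    x * (derivative (∑ i ∈ s, C (a i) * X ^ N i)).eval x = ∑ i ∈ s, a i * N i * x ^ N i := by
  simp only [derivative_sum, derivative_C_mul_X_pow, eval_finsetSum, eval_C_mul, eval_X_pow,
    Finset.mul_sum]
  refine Finset.sum_congr rfl fun i _ => ?_
  rcases N i with _ | k
  · simp
  · simp only [Nat.add_sub_cancel, pow_succ]
    push_cast
    ring

theorem eval_derivative_C_mul_prod_X_sub_C {K ι : Type*} [Field K] (c : K) (s : Finset ι)
    (w : ι → K) {x : K} (hx : (C c * ∏ j ∈ s, (X - C (w j))).eval x ≠ 0) :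
    (derivative (C c * ∏ j ∈ s, (X - C (w j)))).eval x =
      (C c * ∏ j ∈ s, (X - C (w j))).eval x * ∑ j ∈ s, 1 / (x - w j) := by
  have hc : c ≠ 0 := by rintro rfl; simp at hx
  have hprod : ∏ j ∈ s, (X - C (w j)) = ((s.val.map w).map fun a => X - C a).prod := by
    rw [Multiset.map_map]; rfl
  have hroots : (C c * ∏ j ∈ s, (X - C (w j))).roots = s.val.map w := by
    rw [roots_C_mul _ hc, hprod, roots_multiset_prod_X_sub_C]
  rw [((Splits.prod fun j _ => Splits.X_sub_C (w j)).C_mul c).eval_derivative_eq_eval_mul_sum hx,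
    hroots, Multiset.map_map]
  rfl

theorem sum_add_div_sub_eq {K ι : Type*} [Field K] (s : Finset ι) (w : ι → K) {z : K}
    (hz : ∀ j ∈ s, w j ≠ z) :
    ∑ j ∈ s, (w j + z) / (w j - z) = s.card - 2 * z * ∑ j ∈ s, 1 / (z - w j) := by
  have hterm : ∀ j ∈ s, (w j + z) / (w j - z) = 1 - 2 * z * (1 / (z - w j)) := by
    intro j hj
    have h₁ : w j - z ≠ 0 := sub_ne_zero.mpr (hz j hj)
    have h₂ : z - w j ≠ 0 := sub_ne_zero.mpr (hz j hj).symm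
    field_simp
    ring
  rw [Finset.sum_congr rfl hterm, Finset.sum_sub_distrib, Finset.mul_sum]
  simp

theorem card_Lam_pos (d n : ℕ) : 0 < (Lam d n).card :=
  Finset.card_pos.mpr ⟨0, Finset.mem_Icc.mpr ⟨fun _ => by simp, fun _ => by simp⟩⟩

theorem Ymag_eq_card_sub_two_mul_Nminus {d n : ℕ} (σ : Config d n) :
    Ymag σ = (Lam d n).card - 2 * Nminus σ := by
  have hspin : ∀ u, spin σ u = 1 - 2 * (if σ u = false then 1 else 0) := by
    intro u
    rw [spin]
    cases σ u <;> norm_num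
  simp only [Ymag, hspin, Finset.sum_sub_distrib, ← Finset.mul_sum, Finset.sum_boole]
  simp [Nminus]

/-- `Z_{Λ_n,β,h} = e^{h|Λ_n|} leeYangPoly(e^{-2h})`: the paper's `P_n` times `e^{β|E_n|}`. -/
def leeYangPoly (d n : ℕ) (β : ℝ) : ℂ[X] :=
  ∑ σ : Config d n, C (Real.exp (β * edgeSum d n σ) : ℂ) * X ^ Nminus σ

theorem eval_leeYangPoly (d n : ℕ) (β : ℝ) (z : ℂ) :
    (leeYangPoly d n β).eval z =
      ∑ σ : Config d n, (Real.exp (β * edgeSum d n σ) : ℂ) * z ^ Nminus σ := by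
  simp [leeYangPoly, eval_finsetSum]

theorem magDen_eq_leeYangPoly (d n : ℕ) (β : ℝ) (z : ℂ) :
    magDen d n β z =
      ((Lam d n).card * (leeYangPoly d n β).eval z -
          2 * (z * (derivative (leeYangPoly d n β)).eval z)) /
        ((Lam d n).card * (leeYangPoly d n β).eval z) := by
  rw [magDen, eval_leeYangPoly, leeYangPoly, X_mul_eval_derivative_sum_C_mul_X_pow,
    Finset.mul_sum, Finset.mul_sum, ← Finset.sum_sub_distrib]
  congr 1
  refine Finset.sum_congr rfl fun σ _ => ?_
  rw [Ymag_eq_card_sub_two_mul_Nminus]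
  push_cast
  ring

theorem leeYangPoly_eq_of_isCircleRootListing {d n : ℕ} {β : ℝ} {θ : ℕ → ℝ}
    (hθ : IsCircleRootListing d n β θ) :
    leeYangPoly d n β = C (Real.exp (β * edgeSum d n (fun _ => false)) : ℂ) *
      ∏ j ∈ Finset.range (Lam d n).card, (X - C (Complex.exp (Complex.I * (θ j : ℝ)))) := by
  refine Polynomial.funext fun z => ?_
  rw [eval_leeYangPoly, hθ.2.2 z]
  simp [eval_prod]

theorem statement16_general (d : ℕ) (β : ℝ) (n : ℕ)
    (θ : ℕ → ℝ) (hθ : IsCircleRootListing d n β θ) :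
    ∀ z : ℂ, ‖z‖ < 1 →
      magDen d n β z = (((Lam d n).card : ℂ))⁻¹ *
        ∑ j ∈ Finset.range ((Lam d n).card),
          (Complex.exp (Complex.I * (θ j : ℝ)) + z) /
            (Complex.exp (Complex.I * (θ j : ℝ)) - z) := by
  intro z hz
  set w : ℕ → ℂ := fun j => Complex.exp (Complex.I * (θ j : ℝ))
  have hwz : ∀ j, w j ≠ z := fun j h => by
    simp [w, ← h, Complex.norm_exp] at hz
  have hfactor := leeYangPoly_eq_of_isCircleRootListing hθ
  have hP : (leeYangPoly d n β).eval z ≠ 0 := by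
    rw [hfactor]
    simpa [eval_prod, Finset.prod_ne_zero_iff, sub_eq_zero] using fun j _ => (hwz j).symm
  have hlog : (derivative (leeYangPoly d n β)).eval z =
      (leeYangPoly d n β).eval z * ∑ j ∈ Finset.range (Lam d n).card, 1 / (z - w j) := by
    rw [hfactor] at hP ⊢
    exact eval_derivative_C_mul_prod_X_sub_C _ _ w hP
  have hm : ((Lam d n).card : ℂ) ≠ 0 := Nat.cast_ne_zero.mpr (card_Lam_pos d n).ne'
  rw [magDen_eq_leeYangPoly, hlog, sum_add_div_sub_eq _ _ fun j _ => hwz j, Finset.card_range]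
  field_simp

/-- **Average magnetization density via Lee–Yang zeros:** if the `|Λ_n|` roots of `P_n`
are `exp(iθ_{1,n}), …, exp(iθ_{|Λ_n|,n})` (with multiplicity, nondecreasing in `(0,2π)`),
then for every `z` in the open unit disk,
`m_{Λ_n}(z) = |Λ_n|⁻¹ Σ_j (e^{iθ_j} + z)/(e^{iθ_j} - z)`. -/
theorem statement16 (d : ℕ) (hd : 1 ≤ d) (β : ℝ) (hβ : 0 ≤ β) (n : ℕ)
    (θ : ℕ → ℝ) (hθ : IsCircleRootListing d n β θ) :
    ∀ z : ℂ, ‖z‖ < 1 →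
      magDen d n β z = (((Lam d n).card : ℂ))⁻¹ *
        ∑ j ∈ Finset.range ((Lam d n).card),
          (Complex.exp (Complex.I * (θ j : ℝ)) + z) /
            (Complex.exp (Complex.I * (θ j : ℝ)) - z) :=
  statement16_general d β n θ hθ

end
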